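/- Let ω > 0 be a real number and n ∈ ℕ. Then for every z ∈ ℂ, −z(1+z)·(d²/dz²)S_n^ω(z) + (1 − (2+ω−n)(z+1))·(d/dz)S_n^ω(z) + (1+ω)n·S_n^ω(z) = 0. -/

import Mathlib

/-!
Writing `S_n^ω(z) = Σ_k a_k z^k`, the coefficient of `z^k` in the left-hand side of the
equation is `(n - k)(k + 1 + ω) a_k - (k + 1)(k + 1 + ω - n) a_{k+1}`. With `k = n - 1 - ℓ` the
vanishing of this expression is the ratio `c_{ℓ+1} / c_ℓ = (n - ℓ)(ℓ - ω) / ((ℓ + 1)(ℓ - n - ω))` of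
the terms `c_ℓ = binom(n,ℓ) (−ω)_ℓ / (−n−ω)_ℓ`; the hypothesis `ω > 0` keeps `ℓ - n - ω` away from zero.
-/

open Finset Polynomial

/-- The monic skyburst polynomial
`S_n^ω(z) = Σ_{ℓ=0}^n binom(n,ℓ) · (−ω)_ℓ/(−n−ω)_ℓ · z^{n−ℓ}`,
where `(a)_ℓ` is the Pochhammer (rising factorial) symbol. -/
noncomputable def skyburst (n : ℕ) (ω : ℝ) (z : ℂ) : ℂ :=
  ∑ ℓ ∈ Finset.range (n + 1),
    (n.choose ℓ : ℂ) *
      ((ascPochhammer ℂ ℓ).eval (-(ω : ℂ)) / (ascPochhammer ℂ ℓ).eval (-(n : ℂ) - (ω : ℂ))) *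
      z ^ (n - ℓ)

lemma Nat.cast_succ_mul_choose_succ {R : Type*} [CommRing R] (n ℓ : ℕ) :
    ((ℓ : R) + 1) * n.choose (ℓ + 1) = ((n : R) - ℓ) * n.choose ℓ := by
  rcases le_or_gt ℓ n with h | h
  · have := congrArg (Nat.cast : ℕ → R) (Nat.choose_succ_right_eq n ℓ)
    push_cast [h] at this
    linear_combination this
  · simp [Nat.choose_eq_zero_of_lt h, Nat.choose_eq_zero_of_lt (h.trans (Nat.lt_succ_self ℓ))]

lemma succ_mul_choose_mul_ascPochhammer_div {K : Type*} [Field K] (n ℓ : ℕ) (a b : K)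
    (hb : b + ℓ ≠ 0) :
    ((ℓ : K) + 1) * (b + ℓ) *
        (n.choose (ℓ + 1) * ((ascPochhammer K (ℓ + 1)).eval a / (ascPochhammer K (ℓ + 1)).eval b)) =
      ((n : K) - ℓ) * (a + ℓ) *
        (n.choose ℓ * ((ascPochhammer K ℓ).eval a / (ascPochhammer K ℓ).eval b)) := by
  rw [ascPochhammer_succ_eval, ascPochhammer_succ_eval, mul_div_mul_comm]
  generalize (ascPochhammer K ℓ).eval a / (ascPochhammer K ℓ).eval b = r
  field_simp
  linear_combination (a + ℓ) * r * Nat.cast_succ_mul_choose_succ (R := K) n ℓ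

lemma Polynomial.coeff_hypergeometric_operator {R : Type*} [CommRing R] (b c : R) (P : R[X])
    (k : ℕ) :
    (-(X * (1 + X)) * derivative (derivative P) + (1 - C b * (X + 1)) * derivative P + C c * P).coeff k
      = (k + 1) * (1 - b - k) * P.coeff (k + 1) + (c - b * k - k * (k - 1)) * P.coeff k := by
  have hop : -(X * (1 + X)) * derivative (derivative P) + (1 - C b * (X + 1)) * derivative P
      + C c * P = C c * P + derivative P - C b * derivative P - X * (C b * derivative P)
        - X * derivative (derivative P) - X ^ 2 * derivative (derivative P) := by ring
  rw [hop]
  rcases k with _ | _ | k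
  · simp only [coeff_add, coeff_sub, coeff_derivative, mul_coeff_zero, coeff_X_zero, coeff_X_pow]
    norm_num
    ring
  · simp only [coeff_add, coeff_sub, coeff_C_mul, coeff_derivative, coeff_X_mul, coeff_X_pow_mul']
    norm_num
    ring
  · simp only [coeff_add, coeff_sub, coeff_C_mul, coeff_derivative, coeff_X_mul, coeff_X_pow_mul',
      if_pos (by omega : 2 ≤ k + 2)]
    push_cast
    ring

noncomputable def skyburstCoeff (n : ℕ) (ω : ℝ) (ℓ : ℕ) : ℂ :=
  n.choose ℓ * ((ascPochhammer ℂ ℓ).eval (-(ω : ℂ)) / (ascPochhammer ℂ ℓ).eval (-(n : ℂ) - ω))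

noncomputable def skyburstPoly (n : ℕ) (ω : ℝ) : ℂ[X] :=
  ∑ k ∈ range (n + 1), monomial k (skyburstCoeff n ω (n - k))

lemma skyburstPoly_eval (n : ℕ) (ω : ℝ) (z : ℂ) : (skyburstPoly n ω).eval z = skyburst n ω z := by
  rw [skyburstPoly, eval_finsetSum, skyburst, ← sum_range_reflect]
  refine sum_congr rfl fun ℓ hℓ => ?_
  rw [eval_monomial, Nat.add_sub_cancel, Nat.sub_sub_self (mem_range_succ_iff.mp hℓ)]
  rfl

lemma coeff_skyburstPoly (n : ℕ) (ω : ℝ) (k : ℕ) :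
    (skyburstPoly n ω).coeff k = if k ≤ n then skyburstCoeff n ω (n - k) else 0 := by
  simp [skyburstPoly, coeff_monomial]

lemma skyburstCoeff_succ (n : ℕ) {ω : ℝ} (hω : 0 < ω) {ℓ : ℕ} (hℓ : ℓ < n) :
    ((ℓ : ℂ) + 1) * (-n - ω + ℓ) * skyburstCoeff n ω (ℓ + 1) =
      ((n : ℂ) - ℓ) * (-ω + ℓ) * skyburstCoeff n ω ℓ := by
  refine succ_mul_choose_mul_ascPochhammer_div n ℓ _ _ ?_
  have hlt : (ℓ : ℝ) - n - ω < 0 := by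
    have : (ℓ : ℝ) < n := by exact_mod_cast hℓ
    linarith
  rw [show -(n : ℂ) - ω + ℓ = ((ℓ - n - ω : ℝ) : ℂ) by push_cast; ring]
  exact Complex.ofReal_ne_zero.mpr hlt.ne

lemma skyburstPoly_ode (n : ℕ) {ω : ℝ} (hω : 0 < ω) :
    -(X * (1 + X)) * derivative (derivative (skyburstPoly n ω))
      + (1 - C (2 + (ω : ℂ) - n) * (X + 1)) * derivative (skyburstPoly n ω)
      + C ((1 + (ω : ℂ)) * n) * skyburstPoly n ω = 0 := by
  ext k
  rw [coeff_hypergeometric_operator, coeff_skyburstPoly, coeff_skyburstPoly, coeff_zero]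
  rcases lt_trichotomy k n with hk | rfl | hk
  · obtain ⟨ℓ, rfl⟩ : ∃ ℓ, n = k + 1 + ℓ := ⟨n - (k + 1), by omega⟩
    have hrec := skyburstCoeff_succ (k + 1 + ℓ) hω (ℓ := ℓ) (by omega)
    rw [if_pos (by omega), if_pos (by omega), show k + 1 + ℓ - k = ℓ + 1 by omega,
      show k + 1 + ℓ - (k + 1) = ℓ by omega]
    push_cast at hrec ⊢
    linear_combination -hrec
  · rw [if_neg (by omega), if_pos le_rfl]
    ring
  · rw [if_neg (by omega), if_neg (by omega)]
    ring

theorem skyburst_ODE (ω : ℝ) (hω : 0 < ω) (n : ℕ) (z : ℂ) :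
    -z * (1 + z) * iteratedDeriv 2 (skyburst n ω) z +
        (1 - (2 + (ω : ℂ) - (n : ℂ)) * (z + 1)) * deriv (skyburst n ω) z +
        (1 + (ω : ℂ)) * (n : ℂ) * skyburst n ω z = 0 := by
  have hP : skyburst n ω = fun z => (skyburstPoly n ω).eval z :=
    funext fun z => (skyburstPoly_eval n ω z).symm
  have hderiv (p : ℂ[X]) : deriv (fun z => p.eval z) = fun z => p.derivative.eval z :=
    funext fun _ => Polynomial.deriv p
  have hode := congrArg (eval z) (skyburstPoly_ode n hω)
  simp only [eval_add, eval_mul, eval_neg, eval_sub, eval_C, eval_X, eval_one, eval_zero] at hode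
  rw [iteratedDeriv_succ, iteratedDeriv_one, hP, hderiv, hderiv]
  linear_combination hode
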